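/- arXiv:1911.06006 — 3 statements merged into one kernel-verified Lean document; each statement's English description precedes it below -/
import Mathlib

section
/- Let $y_1, y_2 > 0$ with $y_2 < 1$, and set $h = \sqrt{y_1 + y_2 - y_1 y_2}$, $x_l = \frac{y_2 (h - y_1)^2}{(y_1+y_2)^2}$, $x_r = \frac{y_2 (h + y_1)^2}{(y_1+y_2)^2}$, $\alpha = y_1/y_2$. Then $\int_{x_l}^{x_r} x \cdot \frac{(\alpha+1)\sqrt{(x_r - x)(x - x_l)}}{2\pi y_1 x (1-x)} \, dx = \frac{y_2}{y_1+y_2}$. -/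
open Real Set

/-!
Cancelling `x`, the integrand is a constant multiple of `√((x_r - x)(x - x_l)) / (1 - x)`, and for
`a < b < 1` the function `√((b - x)(x - a)) / (1 - x)` has an elementary antiderivative made of
two arcsines, whose increment over `[a, b]` is `π (1 - (a + b)/2 - √((1 - a)(1 - b)))`.
For the Beta endpoints `1 - x_{l,r} = y₁ (h ± y₂)² / (y₁ + y₂)²` and
`h² - y₂² = (y₁ + y₂)(1 - y₂) > 0`, so `√((1 - x_l)(1 - x_r)) = y₁ (1 - y₂) / (y₁ + y₂)`,
and the rest is algebra.
-/

theorem HasDerivAt.arcsin_of_one_sub_sq_eq {f : ℝ → ℝ} {f' q x : ℝ} (hf : HasDerivAt f f' x)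
    (hq : 0 < q) (hfq : 1 - f x ^ 2 = q ^ 2) :
    HasDerivAt (fun y => arcsin (f y)) (f' / q) x := by
  have hlt : |f x| < 1 := by rw [← sq_lt_one_iff_abs_lt_one]; nlinarith
  have := (hasDerivAt_arcsin (abs_lt.1 hlt).1.ne' (abs_lt.1 hlt).2.ne).comp x hf
  rwa [hfq, sqrt_sq hq.le, one_div_mul_eq_div] at this

-- With `P = (b - x)(x - a)` one has
-- `√P / (1 - x) = (1 - (a + b) / 2 - (a + b - 2x) / 2 - (1 - a)(1 - b) / (1 - x)) / √P`,
-- and the three summands integrate to the three summands below.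
noncomputable def antiderivSqrtDivOneSub (a b x : ℝ) : ℝ :=
  (1 - (a + b) / 2) * arcsin ((2 * x - a - b) / (b - a)) - √((b - x) * (x - a)) +
    √((1 - a) * (1 - b)) * arcsin (((1 - a) * (b - x) - (1 - b) * (x - a)) / ((b - a) * (1 - x)))

section
variable {a b : ℝ}

theorem hasDerivAt_antiderivSqrtDivOneSub (hb : b < 1) {x : ℝ} (hx : x ∈ Ioo a b) :
    HasDerivAt (antiderivSqrtDivOneSub a b) (√((b - x) * (x - a)) / (1 - x)) x := by
  obtain ⟨hax, hxb⟩ := hx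
  have hba : 0 < b - a := by linarith
  have h1x : 0 < 1 - x := by linarith
  have hP : 0 < (b - x) * (x - a) := mul_pos (by linarith) (by linarith)
  set S := √((b - x) * (x - a)) with hS_def
  have hS : 0 < S := sqrt_pos.2 hP
  have hS2 : S ^ 2 = (b - x) * (x - a) := sq_sqrt hP.le
  set k := √((1 - a) * (1 - b))
  have hK : 0 < (1 - a) * (1 - b) := mul_pos (by linarith) (by linarith)
  have hk : 0 < k := sqrt_pos.2 hK
  have hk2 : k ^ 2 = (1 - a) * (1 - b) := sq_sqrt hK.le
  have hu : HasDerivAt (fun y => (2 * y - a - b) / (b - a)) (2 / (b - a)) x := by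
    simpa using (((hasDerivAt_id x).const_mul 2).sub_const a |>.sub_const b).div_const (b - a)
  have hv : HasDerivAt (fun y => ((1 - a) * (b - y) - (1 - b) * (y - a)) / ((b - a) * (1 - y)))
      (-2 * k ^ 2 / ((b - a) * (1 - x) ^ 2)) x := by
    have hnum : HasDerivAt (fun y => (1 - a) * (b - y) - (1 - b) * (y - a)) (-(2 - a - b)) x := by
      refine ((((hasDerivAt_id x).const_sub b).const_mul (1 - a)).sub
        (((hasDerivAt_id x).sub_const a).const_mul (1 - b))).congr_deriv ?_
      simp; ring
    have hden : HasDerivAt (fun y => (b - a) * (1 - y)) (-(b - a)) x := by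
      simpa using ((hasDerivAt_id x).const_sub 1).const_mul (b - a)
    refine (hnum.div hden (by positivity)).congr_deriv ?_
    rw [hk2]; field_simp; ring
  have h1 := hu.arcsin_of_one_sub_sq_eq (q := 2 * S / (b - a)) (by positivity) (by
    field_simp; linear_combination (-4) * hS2)
  have h2 : HasDerivAt (fun y => √((b - y) * (y - a))) ((a + b - 2 * x) / (2 * S)) x := by
    have hP' : HasDerivAt (fun y => (b - y) * (y - a)) (a + b - 2 * x) x := by
      refine (((hasDerivAt_id x).const_sub b).mul ((hasDerivAt_id x).sub_const a)).congr_deriv ?_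
      simp; ring
    simpa [hS_def] using hP'.sqrt hP.ne'
  have h3 := hv.arcsin_of_one_sub_sq_eq (q := 2 * k * S / ((b - a) * (1 - x))) (by positivity) (by
    field_simp; linear_combination (-4) * k ^ 2 * hS2 - 4 * (b - x) * (x - a) * hk2)
  refine (((h1.const_mul (1 - (a + b) / 2)).sub h2).add (h3.const_mul k)).congr_deriv ?_
  field_simp
  linear_combination (-2) * hS2 - 2 * hk2

theorem continuousOn_antiderivSqrtDivOneSub (hab : a < b) (hb : b < 1) :
    ContinuousOn (antiderivSqrtDivOneSub a b) (Icc a b) := by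
  have hden : ∀ x ∈ Icc a b, (b - a) * (1 - x) ≠ 0 := fun x hx =>
    mul_ne_zero (sub_pos.2 hab).ne' (sub_pos.2 (hx.2.trans_lt hb)).ne'
  unfold antiderivSqrtDivOneSub
  fun_prop (disch := assumption)

theorem antiderivSqrtDivOneSub_right_sub_left (hab : a < b) (hb : b < 1) :
    antiderivSqrtDivOneSub a b b - antiderivSqrtDivOneSub a b a =
      π * (1 - (a + b) / 2 - √((1 - a) * (1 - b))) := by
  have hba : b - a ≠ 0 := by linarith
  have hb1 : 1 - b ≠ 0 := by linarith
  have ha1 : 1 - a ≠ 0 := by linarith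
  simp only [antiderivSqrtDivOneSub, sub_self, zero_mul, mul_zero, sqrt_zero]
  rw [show (2 * b - a - b) / (b - a) = 1 by field_simp; ring,
    show (2 * a - a - b) / (b - a) = -1 by field_simp; ring,
    show (0 - (1 - b) * (b - a)) / ((b - a) * (1 - b)) = -1 by field_simp; ring,
    show ((1 - a) * (b - a) - 0) / ((b - a) * (1 - a)) = 1 by field_simp; ring,
    arcsin_one, arcsin_neg_one]
  ring

theorem integral_sqrt_mul_div_one_sub (hab : a < b) (hb : b < 1) :
    ∫ x in a..b, √((b - x) * (x - a)) / (1 - x) =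
      π * (1 - (a + b) / 2 - √((1 - a) * (1 - b))) := by
  rw [intervalIntegral.integral_eq_sub_of_hasDerivAt_of_le hab.le
    (continuousOn_antiderivSqrtDivOneSub hab hb)
    (fun x hx => hasDerivAt_antiderivSqrtDivOneSub hb hx),
    antiderivSqrtDivOneSub_right_sub_left hab hb]
  refine ContinuousOn.intervalIntegrable (ContinuousOn.div (by fun_prop) (by fun_prop) ?_)
  intro x hx
  rw [uIcc_of_le hab.le] at hx
  exact (sub_pos.2 (hx.2.trans_lt hb)).ne'

theorem integral_mul_sqrt_div_mul_one_sub (hab : a < b) (hb : b < 1) (c K : ℝ) :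
    ∫ x in a..b, x * (c * √((b - x) * (x - a)) / (K * x * (1 - x))) =
      c / K * (π * (1 - (a + b) / 2 - √((1 - a) * (1 - b)))) := by
  rw [← integral_sqrt_mul_div_one_sub hab hb, ← intervalIntegral.integral_const_mul]
  refine intervalIntegral.integral_congr_ae ?_
  filter_upwards [MeasureTheory.volume.ae_ne 0] with x hx _
  field_simp

end

theorem stmt_1 (y1 y2 : ℝ) (hy1 : 0 < y1) (hy2 : 0 < y2) (hy2' : y2 < 1) :
    let h := Real.sqrt (y1 + y2 - y1 * y2)
    let xl := y2 * (h - y1) ^ 2 / (y1 + y2) ^ 2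
    let xr := y2 * (h + y1) ^ 2 / (y1 + y2) ^ 2
    let α := y1 / y2
    (∫ x in xl..xr, x * ((α + 1) * Real.sqrt ((xr - x) * (x - xl)) /
        (2 * π * y1 * x * (1 - x)))) = y2 / (y1 + y2) := by
  intro h xl xr α
  have hs : 0 < y1 + y2 := by linarith
  have hh2 : h ^ 2 = y1 + y2 - y1 * y2 := sq_sqrt (by nlinarith)
  have hh : y2 < h := by nlinarith [sqrt_nonneg (y1 + y2 - y1 * y2)]
  have hlr : xl < xr := by
    rw [← sub_pos, show xr - xl = 4 * y1 * y2 * h / (y1 + y2) ^ 2 by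
      simp only [xl, xr]; field_simp; ring]
    have := hy2.trans hh
    positivity
  have h1xr : 1 - xr = y1 * (h - y2) ^ 2 / (y1 + y2) ^ 2 := by
    simp only [xr]; field_simp; linear_combination (-(y1 + y2)) * hh2
  have h1xl : 1 - xl = y1 * (h + y2) ^ 2 / (y1 + y2) ^ 2 := by
    simp only [xl]; field_simp; linear_combination (-(y1 + y2)) * hh2
  have hsqrt : √((1 - xl) * (1 - xr)) = y1 * (1 - y2) / (y1 + y2) := by
    have hdiff : (h + y2) * (h - y2) = (y1 + y2) * (1 - y2) := by linear_combination hh2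
    rw [h1xl, h1xr, ← sqrt_sq (div_nonneg (mul_nonneg hy1.le (by linarith)) hs.le)]
    congr 1
    field_simp
    rw [← mul_pow, hdiff, mul_pow]
  have hr1 : xr < 1 := by
    rw [← sub_pos, h1xr]
    exact div_pos (mul_pos hy1 (pow_pos (sub_pos.2 hh) 2)) (by positivity)
  rw [integral_mul_sqrt_div_mul_one_sub hlr hr1, hsqrt]
  simp only [xl, xr, α]
  field_simp
  linear_combination (-2 * y2) * hh2
end

section
/- Let $y_1, y_2 > 0$ with $y_1 > 1$ and $y_2 > 1$, $h = \sqrt{y_1+y_2-y_1y_2}$ real positive, $x_l, x_r = \frac{y_2(h \mp y_1)^2}{(y_1+y_2)^2}$, $\alpha = y_1/y_2$. Then $\int_{x_l}^{x_r} \frac{(\alpha+1)\sqrt{(x_r-x)(x-x_l)}}{2\pi y_1 x(1-x)}\,dx = \frac{h^2}{y_1 y_2}$. -/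
open Real Set intervalIntegral

/-! Partial fractions `1 / (x (1 - x)) = 1 / x + 1 / (1 - x)` split the integral into two integrals
`∫ₐᵇ √((b - x) (x - a)) / (x - c) dx` with the pole `c ∉ [a, b]`. For `c = 0` an explicit primitive
(a square root plus two arcsines) gives `π ((a + b) / 2 - √(a b))`, and `c = 1` reduces to this by
`x ↦ 1 - x`. At the edges, `√(xl xr) = y2 (y1 - 1) / (y1 + y2)` because
`(h - y1) (h + y1) = (1 - y1) (y1 + y2)`; and `1 - xl`, `1 - xr` are the edges with `y1` and `y2`
exchanged, so `√((1 - xl) (1 - xr)) = y1 (y2 - 1) / (y1 + y2)`. The sum collapses to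
`h² / (y1 y2)`. -/

lemma HasDerivAt.arcsin_of_sq_eq {g : ℝ → ℝ} {g' s x : ℝ} (hg : HasDerivAt g g' x)
    (hs : 0 < s) (hsq : s ^ 2 = 1 - g x ^ 2) :
    HasDerivAt (fun y => arcsin (g y)) (g' / s) x := by
  have hlt : g x ^ 2 < 1 := by nlinarith
  have hsqrt : √(1 - g x ^ 2) = s := by rw [← hsq, sqrt_sq hs.le]
  have hne : g x ≠ -1 ∧ g x ≠ 1 := by
    constructor <;> rintro heq <;> simp [heq] at hlt
  have := (hasDerivAt_arcsin hne.1 hne.2).comp x hg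
  rw [hsqrt] at this
  simpa [div_eq_inv_mul, Function.comp_def] using this

lemma hasDerivAt_primitive_sqrt_sub_mul_sub_div {a b x : ℝ} (ha : 0 < a) (hx : x ∈ Ioo a b) :
    HasDerivAt (fun x => √((b - x) * (x - a)) + (a + b) / 2 * arcsin ((2 * x - a - b) / (b - a))
        - √(a * b) * arcsin (((a + b) * x - 2 * (a * b)) / ((b - a) * x)))
      (√((b - x) * (x - a)) / x) x := by
  obtain ⟨hax, hxb⟩ := hx
  have hx0 : 0 < x := ha.trans hax
  have hba : 0 < b - a := by linarith
  have hR : 0 < (b - x) * (x - a) := mul_pos (by linarith) (by linarith)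
  set r := √((b - x) * (x - a))
  have hr : 0 < r := sqrt_pos.2 hR
  have hr2 : r ^ 2 = (b - x) * (x - a) := sq_sqrt hR.le
  have hab0 : 0 < a * b := by nlinarith
  set q := √(a * b)
  have hq : 0 < q := sqrt_pos.2 hab0
  have hq2 : q ^ 2 = a * b := sq_sqrt hab0.le
  have dR : HasDerivAt (fun x => (b - x) * (x - a)) (a + b - 2 * x) x :=
    ((hasDerivAt_id' x).const_sub b).mul ((hasDerivAt_id' x).sub_const a) |>.congr_deriv (by ring)
  have d0 : HasDerivAt (fun x => √((b - x) * (x - a))) ((a + b - 2 * x) / (2 * r)) x :=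
    dR.sqrt hR.ne'
  have d1 : HasDerivAt (fun x => arcsin ((2 * x - a - b) / (b - a)))
      ((2 / (b - a)) / (2 * r / (b - a))) x := by
    refine HasDerivAt.arcsin_of_sq_eq ?_ (by positivity) ?_
    · exact ((((hasDerivAt_id' x).const_mul 2).sub_const a).sub_const b).div_const (b - a)
        |>.congr_deriv (by ring)
    · field_simp; linear_combination 4 * hr2
  have d2 : HasDerivAt (fun x => arcsin (((a + b) * x - 2 * (a * b)) / ((b - a) * x)))
      ((2 * (a * b) / ((b - a) * x ^ 2)) / (2 * q * r / ((b - a) * x))) x := by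
    refine HasDerivAt.arcsin_of_sq_eq ?_ (by positivity) ?_
    · exact (((hasDerivAt_id' x).const_mul (a + b)).sub_const (2 * (a * b))).div
        ((hasDerivAt_id' x).const_mul (b - a)) (by positivity) |>.congr_deriv (by field_simp; ring)
    · field_simp; linear_combination (4 * r ^ 2) * hq2 + (4 * (a * b)) * hr2
  refine ((d0.add (d1.const_mul _)).sub (d2.const_mul q)).congr_deriv ?_
  field_simp
  linear_combination (-2) * hr2

lemma integral_sqrt_sub_mul_sub_div {a b : ℝ} (ha : 0 < a) (hab : a < b) :
    ∫ x in a..b, √((b - x) * (x - a)) / x = π * ((a + b) / 2 - √(a * b)) := by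
  have hcont : ContinuousOn (fun x => √((b - x) * (x - a))
      + (a + b) / 2 * arcsin ((2 * x - a - b) / (b - a))
      - √(a * b) * arcsin (((a + b) * x - 2 * (a * b)) / ((b - a) * x))) (Icc a b) := by
    have hba : 0 < b - a := sub_pos.2 hab
    fun_prop (disch := intro x (hx : x ∈ Icc a b); have := ha.trans_le hx.1; positivity)
  have hint : IntervalIntegrable (fun x => √((b - x) * (x - a)) / x) MeasureTheory.volume a b := by
    refine ContinuousOn.intervalIntegrable ?_
    rw [uIcc_of_le hab.le]
    fun_prop (disch := intro x (hx : x ∈ Icc a b); exact (ha.trans_le hx.1).ne')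
  rw [integral_eq_sub_of_hasDerivAt_of_le hab.le hcont
    (fun x hx => hasDerivAt_primitive_sqrt_sub_mul_sub_div ha hx) hint]
  have hba : b - a ≠ 0 := sub_ne_zero.2 hab.ne'
  have ha0 : a ≠ 0 := ha.ne'
  have hb0 : b ≠ 0 := (ha.trans hab).ne'
  have e1 : (2 * b - a - b) / (b - a) = 1 := by rw [div_eq_iff hba]; ring
  have e2 : ((a + b) * b - 2 * (a * b)) / ((b - a) * b) = 1 := by
    rw [div_eq_iff (mul_ne_zero hba hb0)]; ring
  have e3 : (2 * a - a - b) / (b - a) = -1 := by rw [div_eq_iff hba]; ring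
  have e4 : ((a + b) * a - 2 * (a * b)) / ((b - a) * a) = -1 := by
    rw [div_eq_iff (mul_ne_zero hba ha0)]; ring
  simp only [e1, e2, e3, e4, sub_self, zero_mul, mul_zero, arcsin_one, arcsin_neg_one]
  ring

lemma integral_sqrt_sub_mul_sub_div_sub {a b c : ℝ} (hab : a < b) (hbc : b < c) :
    ∫ x in a..b, √((b - x) * (x - a)) / (c - x) =
      π * (c - (a + b) / 2 - √((c - a) * (c - b))) := by
  have key := integral_sqrt_sub_mul_sub_div (a := c - b) (b := c - a) (by linarith) (by linarith)
  rw [← integral_comp_sub_left] at key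
  simp only [sub_sub_sub_cancel_left] at key
  rw [mul_comm (c - a)]
  convert key using 3 with x
  · rw [mul_comm]
  · ring

lemma integral_sqrt_sub_mul_sub_div_mul_one_sub {a b : ℝ} (ha : 0 < a) (hab : a < b)
    (hb : b < 1) :
    ∫ x in a..b, √((b - x) * (x - a)) / (x * (1 - x)) =
      π * (1 - √(a * b) - √((1 - a) * (1 - b))) := by
  have hpos : ∀ x ∈ uIcc a b, 0 < x ∧ 0 < 1 - x := by
    intro x hx
    rw [uIcc_of_le hab.le] at hx
    exact ⟨ha.trans_le hx.1, by linarith [hx.2]⟩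
  have hsplit : EqOn (fun x => √((b - x) * (x - a)) / (x * (1 - x)))
      (fun x => √((b - x) * (x - a)) / x + √((b - x) * (x - a)) / (1 - x)) (uIcc a b) := by
    intro x hx
    have hx0 := (hpos x hx).1.ne'
    have hx1 := (hpos x hx).2.ne'
    field_simp
    ring
  have hint₀ : IntervalIntegrable (fun x => √((b - x) * (x - a)) / x) MeasureTheory.volume a b :=
    ContinuousOn.intervalIntegrable <| by
      fun_prop (disch := intro x (hx : x ∈ uIcc a b); exact (hpos x hx).1.ne')
  have hint₁ : IntervalIntegrable (fun x => √((b - x) * (x - a)) / (1 - x))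
      MeasureTheory.volume a b :=
    ContinuousOn.intervalIntegrable <| by
      fun_prop (disch := intro x (hx : x ∈ uIcc a b); exact (hpos x hx).2.ne')
  rw [integral_congr hsplit, integral_add hint₀ hint₁, integral_sqrt_sub_mul_sub_div ha hab,
    integral_sqrt_sub_mul_sub_div_sub hab hb]
  ring

section WachterEdges

variable {y1 y2 h : ℝ}

lemma wachter_edges_mul (hs : y1 + y2 ≠ 0) (hh : h ^ 2 = y1 + y2 - y1 * y2) :
    y2 * (h - y1) ^ 2 / (y1 + y2) ^ 2 * (y2 * (h + y1) ^ 2 / (y1 + y2) ^ 2) =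
      (y2 * (y1 - 1) / (y1 + y2)) ^ 2 := by
  field_simp
  linear_combination y2 ^ 2 * (h ^ 2 - y1 ^ 2 + (y1 + y2) * (1 - y1)) * hh

lemma wachter_one_sub_edges_mul (hs : y1 + y2 ≠ 0) (hh : h ^ 2 = y1 + y2 - y1 * y2) :
    (1 - y2 * (h - y1) ^ 2 / (y1 + y2) ^ 2) * (1 - y2 * (h + y1) ^ 2 / (y1 + y2) ^ 2) =
      (y1 * (y2 - 1) / (y1 + y2)) ^ 2 := by
  have hs' : y2 + y1 ≠ 0 := by rwa [add_comm]
  have hl : 1 - y2 * (h - y1) ^ 2 / (y1 + y2) ^ 2 = y1 * (h + y2) ^ 2 / (y2 + y1) ^ 2 := by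
    field_simp
    linear_combination (-(y1 + y2) ^ 3) * hh
  have hr : 1 - y2 * (h + y1) ^ 2 / (y1 + y2) ^ 2 = y1 * (h - y2) ^ 2 / (y2 + y1) ^ 2 := by
    field_simp
    linear_combination (-(y1 + y2) ^ 3) * hh
  rw [hl, hr, mul_comm, wachter_edges_mul hs' (by linear_combination hh), add_comm]

lemma wachter_edges_order (hy1 : 1 < y1) (hy2 : 1 < y2) (h_pos : 0 < h)
    (hh : h ^ 2 = y1 + y2 - y1 * y2) :
    0 < y2 * (h - y1) ^ 2 / (y1 + y2) ^ 2 ∧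
      y2 * (h - y1) ^ 2 / (y1 + y2) ^ 2 < y2 * (h + y1) ^ 2 / (y1 + y2) ^ 2 ∧
      y2 * (h + y1) ^ 2 / (y1 + y2) ^ 2 < 1 := by
  have hs : 0 < (y1 + y2) ^ 2 := by positivity
  have h_lt_y1 : h < y1 := by nlinarith
  have h_lt_y2 : h < y2 := by nlinarith
  have h_ne_y1 : h - y1 ≠ 0 := sub_ne_zero.2 h_lt_y1.ne
  refine ⟨by positivity, ?_, ?_⟩
  · rw [div_lt_div_iff_of_pos_right hs]
    nlinarith [mul_pos (mul_pos (by linarith : (0:ℝ) < y1) (by linarith : (0:ℝ) < y2)) h_pos]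
  · rw [div_lt_one hs]
    nlinarith [mul_pos (by linarith : (0:ℝ) < y1) (mul_pos (sub_pos.2 h_lt_y2) (sub_pos.2 h_lt_y2))]

end WachterEdges

theorem stmt_2 (y1 y2 : ℝ) (hy1 : 1 < y1) (hy2 : 1 < y2)
    (hpos : y1 * y2 < y1 + y2) :
    let h := Real.sqrt (y1 + y2 - y1 * y2)
    let xl := y2 * (h - y1) ^ 2 / (y1 + y2) ^ 2
    let xr := y2 * (h + y1) ^ 2 / (y1 + y2) ^ 2
    let α := y1 / y2
    (∫ x in xl..xr, (α + 1) * Real.sqrt ((xr - x) * (x - xl)) /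
        (2 * π * y1 * x * (1 - x))) = h ^ 2 / (y1 * y2) := by
  intro h xl xr α
  have hh : h ^ 2 = y1 + y2 - y1 * y2 := sq_sqrt (by linarith)
  have hs : 0 < y1 + y2 := by linarith
  obtain ⟨hxl, hxlr, hxr⟩ : 0 < xl ∧ xl < xr ∧ xr < 1 :=
    wachter_edges_order hy1 hy2 (sqrt_pos.2 (by linarith)) hh
  have hsqrt : √(xl * xr) = y2 * (y1 - 1) / (y1 + y2) := by
    rw [wachter_edges_mul hs.ne' hh]
    exact sqrt_sq (div_nonneg (mul_nonneg (by linarith) (by linarith)) hs.le)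
  have hsqrt' : √((1 - xl) * (1 - xr)) = y1 * (y2 - 1) / (y1 + y2) := by
    rw [wachter_one_sub_edges_mul hs.ne' hh]
    exact sqrt_sq (div_nonneg (mul_nonneg (by linarith) (by linarith)) hs.le)
  have hfactor : ∀ x, (α + 1) * √((xr - x) * (x - xl)) / (2 * π * y1 * x * (1 - x)) =
      (α + 1) / (2 * π * y1) * (√((xr - x) * (x - xl)) / (x * (1 - x))) := fun x => by
    rw [← mul_div_mul_comm]; congr 1; ring
  simp only [hfactor]
  rw [integral_const_mul, integral_sqrt_sub_mul_sub_div_mul_one_sub hxl hxlr hxr, hsqrt, hsqrt',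
    hh, show α = y1 / y2 from rfl]
  field_simp
  ring
end

section
/- Let $y_1 > 1$, $y_2 > 0$, $h = \sqrt{y_1+y_2-y_1y_2}$ real positive, $x_l, x_r = \frac{y_2(h\mp y_1)^2}{(y_1+y_2)^2}$, $\alpha = y_1/y_2$. Then $\int_{x_l}^{x_r} (1-x)\frac{(\alpha+1)\sqrt{(x_r-x)(x-x_l)}}{2\pi y_1 x(1-x)}\,dx = \frac{h^2}{y_1(y_1+y_2)}$. -/
/-!
After cancelling `1 - x`, the integrand is `(α + 1) / (2π y₁) · √((x_r - x)(x - x_l)) / x`,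
and for `0 < a ≤ b` the elementary primitive `sqrtDivPrimitive` gives
`∫ₐᵇ √((b - x)(x - a)) / x dx = π ((a + b) / 2 - √(ab))`.
Here `x_l x_r = (y₂ (y₁² - h²) / (y₁ + y₂)²)²` and `h < y₁` because `y₁ > 1`, so
`√(x_l x_r) = y₂ (y₁² - h²) / (y₁ + y₂)²` and everything collapses to
`h² / (y₁ (y₁ + y₂))`; for `y₁ < 1` the sign of `y₁² - h²` flips and so does the answer.
-/

open Real Set

noncomputable def sqrtDivPrimitive (a b x : ℝ) : ℝ :=
  √((b - x) * (x - a)) + (a + b) / 2 * arcsin ((2 * x - a - b) / (b - a))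
    - √(a * b) * arcsin (((a + b) * x - 2 * a * b) / ((b - a) * x))

section Primitive

variable {a b : ℝ}

lemma continuousOn_sqrtDivPrimitive (ha : 0 < a) (hab : a < b) :
    ContinuousOn (sqrtDivPrimitive a b) (Icc a b) := by
  refine .sub (by fun_prop) (continuousOn_const.mul (continuous_arcsin.comp_continuousOn
    (.div (by fun_prop) (by fun_prop) fun x hx ↦ ?_)))
  have := ha.trans_le hx.1
  have := sub_pos.2 hab
  positivity

variable {x : ℝ}

lemma hasDerivAt_sqrt_sub_mul_sub (hx : x ∈ Ioo a b) :
    HasDerivAt (fun y ↦ √((b - y) * (y - a)))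
      ((a + b - 2 * x) / (2 * √((b - x) * (x - a)))) x := by
  have hP : 0 < (b - x) * (x - a) := mul_pos (sub_pos.2 hx.2) (sub_pos.2 hx.1)
  have hpoly : HasDerivAt (fun y ↦ (b - y) * (y - a)) (a + b - 2 * x) x := by
    refine (((hasDerivAt_id x).const_sub b).mul ((hasDerivAt_id x).sub_const a)).congr_deriv ?_
    simp only [id_eq]
    ring
  exact ((hasDerivAt_sqrt hP.ne').comp x hpoly).congr_deriv (by ring)

lemma hasDerivAt_arcsin_affine (hx : x ∈ Ioo a b) :
    HasDerivAt (fun y ↦ arcsin ((2 * y - a - b) / (b - a)))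
      (1 / √((b - x) * (x - a))) x := by
  obtain ⟨hax, hxb⟩ := hx
  have hba : 0 < b - a := by linarith
  have hP : 0 < (b - x) * (x - a) := mul_pos (by linarith) (by linarith)
  have hu : HasDerivAt (fun y ↦ (2 * y - a - b) / (b - a)) (2 / (b - a)) x := by
    simpa using ((((hasDerivAt_id x).const_mul 2).sub_const a).sub_const b).div_const (b - a)
  have hlo : -1 < (2 * x - a - b) / (b - a) := by rw [lt_div_iff₀ hba]; linarith
  have hhi : (2 * x - a - b) / (b - a) < 1 := by rw [div_lt_one hba]; linarith
  have hroot : √(1 - ((2 * x - a - b) / (b - a)) ^ 2) = 2 * √((b - x) * (x - a)) / (b - a) := by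
    have hsq : 1 - ((2 * x - a - b) / (b - a)) ^ 2
        = (2 * √((b - x) * (x - a)) / (b - a)) ^ 2 := by
      rw [div_pow, div_pow, mul_pow, sq_sqrt hP.le]
      field_simp
      ring
    rw [hsq, sqrt_sq (by positivity)]
  refine ((hasDerivAt_arcsin hlo.ne' hhi.ne).comp x hu).congr_deriv ?_
  rw [hroot]
  field_simp

lemma hasDerivAt_arcsin_moebius (ha : 0 < a) (hx : x ∈ Ioo a b) :
    HasDerivAt (fun y ↦ arcsin (((a + b) * y - 2 * a * b) / ((b - a) * y)))
      (√(a * b) / (x * √((b - x) * (x - a)))) x := by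
  obtain ⟨hax, hxb⟩ := hx
  have hx0 : 0 < x := ha.trans hax
  have hba : 0 < b - a := by linarith
  have hden : 0 < (b - a) * x := mul_pos hba hx0
  have hP : 0 < (b - x) * (x - a) := mul_pos (by linarith) (by linarith)
  have hab : 0 < a * b := mul_pos ha (by linarith)
  have hv : HasDerivAt (fun y ↦ ((a + b) * y - 2 * a * b) / ((b - a) * y))
      (2 * a * b / ((b - a) * x ^ 2)) x := by
    refine ((((hasDerivAt_id x).const_mul (a + b)).sub_const (2 * a * b)).div
      ((hasDerivAt_id x).const_mul (b - a)) hden.ne').congr_deriv ?_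
    simp only [id_eq]
    field_simp
    ring
  have hlo : -1 < ((a + b) * x - 2 * a * b) / ((b - a) * x) := by
    rw [lt_div_iff₀ hden]; nlinarith [mul_pos (ha.trans hax |>.trans hxb) (sub_pos.2 hax)]
  have hhi : ((a + b) * x - 2 * a * b) / ((b - a) * x) < 1 := by
    rw [div_lt_one hden]; nlinarith [mul_pos ha (sub_pos.2 hxb)]
  have hroot : √(1 - (((a + b) * x - 2 * a * b) / ((b - a) * x)) ^ 2)
      = 2 * √(a * b) * √((b - x) * (x - a)) / ((b - a) * x) := by
    have hsq : 1 - (((a + b) * x - 2 * a * b) / ((b - a) * x)) ^ 2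
        = (2 * √(a * b) * √((b - x) * (x - a)) / ((b - a) * x)) ^ 2 := by
      rw [div_pow, div_pow, mul_pow, mul_pow, mul_pow, sq_sqrt hP.le, sq_sqrt hab.le]
      field_simp
      ring
    rw [hsq, sqrt_sq (by positivity)]
  refine ((hasDerivAt_arcsin hlo.ne' hhi.ne).comp x hv).congr_deriv ?_
  rw [hroot]
  have : 0 < √(a * b) := sqrt_pos.2 hab
  field_simp
  rw [sq_sqrt hab.le]

lemma hasDerivAt_sqrtDivPrimitive (ha : 0 < a) (hx : x ∈ Ioo a b) :
    HasDerivAt (sqrtDivPrimitive a b) (√((b - x) * (x - a)) / x) x := by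
  have hx0 : 0 < x := ha.trans hx.1
  have hP : 0 < (b - x) * (x - a) := mul_pos (sub_pos.2 hx.2) (sub_pos.2 hx.1)
  have hS : 0 < √((b - x) * (x - a)) := sqrt_pos.2 hP
  refine (((hasDerivAt_sqrt_sub_mul_sub hx).add ((hasDerivAt_arcsin_affine hx).const_mul _)).sub
    ((hasDerivAt_arcsin_moebius ha hx).const_mul _)).congr_deriv ?_
  field_simp
  rw [sq_sqrt (mul_pos ha (hx0.trans hx.2)).le, sq_sqrt hP.le]
  ring

lemma sqrtDivPrimitive_sub (ha : 0 < a) (hab : a < b) :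
    sqrtDivPrimitive a b b - sqrtDivPrimitive a b a = π * ((a + b) / 2 - √(a * b)) := by
  have hba : b - a ≠ 0 := (sub_pos.2 hab).ne'
  have hb : b ≠ 0 := (ha.trans hab).ne'
  have hright : ((a + b) * b - 2 * a * b) / ((b - a) * b) = 1 := by field_simp; ring
  have hleft : ((a + b) * a - 2 * a * b) / ((b - a) * a) = -1 := by field_simp; ring
  have hright' : (2 * b - a - b) / (b - a) = 1 := by field_simp; ring
  have hleft' : (2 * a - a - b) / (b - a) = -1 := by field_simp; ring
  simp only [sqrtDivPrimitive, hright, hleft, hright', hleft', arcsin_one, arcsin_neg_one,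
    sub_self, mul_zero, zero_mul, sqrt_zero]
  ring

end Primitive

theorem integral_sqrt_sub_mul_sub_div_self {a b : ℝ} (ha : 0 < a) (hab : a ≤ b) :
    ∫ x in a..b, √((b - x) * (x - a)) / x = π * ((a + b) / 2 - √(a * b)) := by
  obtain rfl | hab := hab.eq_or_lt
  · rw [intervalIntegral.integral_same, sqrt_mul_self ha.le]
    ring
  rw [← sqrtDivPrimitive_sub ha hab]
  refine intervalIntegral.integral_eq_sub_of_hasDeriv_right_of_le hab.le
    (continuousOn_sqrtDivPrimitive ha hab)
    (fun x hx ↦ (hasDerivAt_sqrtDivPrimitive ha hx).hasDerivWithinAt)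
    (ContinuousOn.intervalIntegrable (.div (by fun_prop) (by fun_prop) fun x hx ↦ ?_))
  rw [uIcc_of_le hab.le] at hx
  exact (ha.trans_le hx.1).ne'

lemma integral_one_sub_mul_div_mul_one_sub (f : ℝ → ℝ) (c d a b : ℝ) :
    ∫ x in a..b, (1 - x) * (c * f x / (d * x * (1 - x))) = c / d * ∫ x in a..b, f x / x := by
  rw [← intervalIntegral.integral_const_mul]
  refine intervalIntegral.integral_congr_ae ?_
  filter_upwards [MeasureTheory.measure_eq_zero_iff_ae_notMem.1 (Real.volume_singleton (a := 1))]
    with x hx _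
  rw [div_mul_div_comm, ← div_div, mul_div_cancel₀ _ (sub_ne_zero.2 (Ne.symm hx))]

theorem stmt_4_general (y1 y2 : ℝ) (hy1 : 1 < y1) (hy2 : 0 < y2) :
    let h := Real.sqrt (y1 + y2 - y1 * y2)
    let xl := y2 * (h - y1) ^ 2 / (y1 + y2) ^ 2
    let xr := y2 * (h + y1) ^ 2 / (y1 + y2) ^ 2
    let α := y1 / y2
    (∫ x in xl..xr, (1 - x) * ((α + 1) * Real.sqrt ((xr - x) * (x - xl)) /
        (2 * π * y1 * x * (1 - x)))) = h ^ 2 / (y1 * (y1 + y2)) := by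
  intro h xl xr α
  have hh : 0 ≤ h := sqrt_nonneg _
  have hhy1 : h < y1 := (sqrt_lt' (by linarith)).2 (by nlinarith)
  have hxl : 0 < xl := by
    have : h - y1 ≠ 0 := by linarith
    positivity
  have hxlr : xl ≤ xr := by
    simp only [xl, xr]
    gcongr y2 * ?_ / _
    nlinarith
  have hroot : √(xl * xr) = y2 * (y1 ^ 2 - h ^ 2) / (y1 + y2) ^ 2 := by
    have : 0 ≤ y1 ^ 2 - h ^ 2 := by nlinarith
    rw [← sqrt_sq (by positivity : 0 ≤ y2 * (y1 ^ 2 - h ^ 2) / (y1 + y2) ^ 2)]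
    congr 1
    simp only [xl, xr]
    ring
  rw [integral_one_sub_mul_div_mul_one_sub, integral_sqrt_sub_mul_sub_div_self hxl hxlr, hroot]
  simp only [xl, xr, α]
  field_simp
  ring

theorem stmt_4 (y1 y2 : ℝ) (hy1 : 1 < y1) (hy2 : 0 < y2)
    (hpos : y1 * y2 < y1 + y2) :
    let h := Real.sqrt (y1 + y2 - y1 * y2)
    let xl := y2 * (h - y1) ^ 2 / (y1 + y2) ^ 2
    let xr := y2 * (h + y1) ^ 2 / (y1 + y2) ^ 2
    let α := y1 / y2
    (∫ x in xl..xr, (1 - x) * ((α + 1) * Real.sqrt ((xr - x) * (x - xl)) /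
        (2 * π * y1 * x * (1 - x)))) = h ^ 2 / (y1 * (y1 + y2)) :=
  stmt_4_general y1 y2 hy1 hy2
end
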